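/- arXiv:1403.6909 — 3 statements merged into one kernel-verified Lean document; each statement's English description precedes it below -/
import Mathlib

section
/- Let V be a real vector space, let I₀, I₁ : V → V be linear maps, let Q : V* → V be a skew linear map (ξ(Qη) = -η(Qξ) for all ξ, η ∈ V*), and let B : V → V* be a skew linear map ((Bx)(y) = -(By)(x) for all x, y ∈ V). Then e^B ∘ 𝕁_{I₀,Q} ∘ e^{-B} = 𝕁_{I₁,Q} as endomorphisms of V × V* if and only if both (i) I₁ = I₀ + Q ∘ B and (ii) (Bx)(I₀y) + (B(I₁x))(y) = 0 for all x, y ∈ V. -/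
/-- The B-field transform `e^B : V × V* → V × V*`, `(x, ξ) ↦ (x, ξ + Bx)`. -/
def bFieldTransform {V : Type*} [AddCommGroup V] [Module ℝ V]
    (B : V →ₗ[ℝ] Module.Dual ℝ V) (p : V × Module.Dual ℝ V) :
    V × Module.Dual ℝ V :=
  (p.1, p.2 + B p.1)

/-- The block upper-triangular map `𝕁_{I,Q} : (x, ξ) ↦ (-Ix + Qξ, ξ ∘ I)`. -/
def Jblock {V : Type*} [AddCommGroup V] [Module ℝ V]
    (I : V →ₗ[ℝ] V) (Q : Module.Dual ℝ V →ₗ[ℝ] V) (p : V × Module.Dual ℝ V) :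
    V × Module.Dual ℝ V :=
  (-(I p.1) + Q p.2, LinearMap.comp p.2 I)

/-! Conjugating `𝕁_{I,Q}` by `e^B` replaces `I` by `I + QB` and adds to the dual component the
term `-(Bx ∘ I + B((I + QB)x))` together with `B(Qξ) - ξ ∘ QB`; the latter vanishes because `B`
and `Q` are both skew. So `e^B 𝕁_{I₀,Q} e^{-B} = 𝕁_{I₁,Q}` exactly when `I₁ = I₀ + QB` and the
remaining term, which only depends on `x`, vanishes. -/

section

variable {V : Type*} [AddCommGroup V] [Module ℝ V]

lemma skew_apply_skew_eq_comp {Q : Module.Dual ℝ V →ₗ[ℝ] V}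
    (hQ : ∀ ξ η : Module.Dual ℝ V, ξ (Q η) = -η (Q ξ)) {B : V →ₗ[ℝ] Module.Dual ℝ V}
    (hB : ∀ x y : V, B x y = -(B y x)) (ξ : Module.Dual ℝ V) :
    B (Q ξ) = ξ ∘ₗ Q ∘ₗ B := by
  ext y
  simp [hB (Q ξ) y, hQ ξ (B y)]

lemma Jblock_inl (I : V →ₗ[ℝ] V) (Q : Module.Dual ℝ V →ₗ[ℝ] V) (x : V) :
    Jblock I Q (x, 0) = (-I x, 0) := by
  simp [Jblock]

lemma bFieldTransform_Jblock_bFieldTransform_neg (I : V →ₗ[ℝ] V)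
    {Q : Module.Dual ℝ V →ₗ[ℝ] V} (hQ : ∀ ξ η : Module.Dual ℝ V, ξ (Q η) = -η (Q ξ))
    {B : V →ₗ[ℝ] Module.Dual ℝ V} (hB : ∀ x y : V, B x y = -(B y x))
    (p : V × Module.Dual ℝ V) :
    bFieldTransform B (Jblock I Q (bFieldTransform (-B) p)) =
      Jblock (I + Q ∘ₗ B) Q p + (0, -(B p.1 ∘ₗ I + B ((I + Q ∘ₗ B) p.1))) := by
  obtain ⟨x, ξ⟩ := p
  have hBQ := skew_apply_skew_eq_comp hQ hB ξ
  simp only [bFieldTransform, Jblock, LinearMap.neg_apply, LinearMap.add_apply,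
    LinearMap.comp_apply, map_add, map_neg, Prod.mk_add_mk, add_zero, hBQ,
    Prod.mk.injEq]
  constructor
  · abel
  · ext y
    simp only [LinearMap.add_apply, LinearMap.neg_apply, LinearMap.comp_apply, map_add]
    ring

end

theorem gauge_equivalence_iff
    {V : Type*} [AddCommGroup V] [Module ℝ V]
    (I₀ I₁ : V →ₗ[ℝ] V)
    (Q : Module.Dual ℝ V →ₗ[ℝ] V)
    (hQ : ∀ ξ η : Module.Dual ℝ V, ξ (Q η) = -η (Q ξ))
    (B : V →ₗ[ℝ] Module.Dual ℝ V)
    (hB : ∀ x y : V, B x y = -(B y x)) :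
    (∀ p : V × Module.Dual ℝ V,
        bFieldTransform B (Jblock I₀ Q (bFieldTransform (-B) p)) = Jblock I₁ Q p)
      ↔ (I₁ = I₀ + Q ∘ₗ B ∧ ∀ x y : V, B x (I₀ y) + B (I₁ x) y = 0) := by
  simp only [bFieldTransform_Jblock_bFieldTransform_neg I₀ hQ hB]
  constructor
  · intro h
    have hx (x : V) := h (x, 0)
    simp only [Jblock_inl, Prod.mk_add_mk, add_zero, zero_add, Prod.mk.injEq, neg_inj,
      neg_eq_zero] at hx
    have hI : I₁ = I₀ + Q ∘ₗ B := LinearMap.ext fun x ↦ ((hx x).1).symm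
    subst hI
    exact ⟨rfl, fun x y ↦ LinearMap.congr_fun (hx x).2 y⟩
  · rintro ⟨rfl, hcorr⟩ p
    have : B p.1 ∘ₗ I₀ + B ((I₀ + Q ∘ₗ B) p.1) = 0 := LinearMap.ext (hcorr p.1)
    rw [this, neg_zero, Prod.mk_zero_zero, add_zero]
end

section
/- Let V be a finite-dimensional real normed vector space, let Q : V* → V be a skew linear map (ξ(Qη) = -η(Qξ) for all ξ, η ∈ V*), let I₀ : V → V be linear, and let B : ℝ → Hom(V, V*) be a differentiable family of linear maps such that each B_t is skew ((B_t x)(y) = -(B_t y)(x) for all x, y). Define I_t := I₀ + Q ∘ B_t, and assume that for every t ∈ ℝ and all x, y ∈ V one has (B_t x)(I₀ y) + (B_t(I_t x))(y) = 0. Then for every t and all x, y ∈ V, the derivative B'_t := (d/dt)B_t satisfies (B'_t x)(I_t y) + (B'_t(I_t x))(y) = 0; that is, B'_t is of type (1,1) with respect to I_t. -/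
/-! Differentiate the gauge equation `B_t x (I₀ y) + B_t (I_t x) y = 0` in `t`. Besides
`Ḃ_t x (I₀ y) + Ḃ_t (I_t x) y`, the variation `İ_t = Q Ḃ_t` contributes `B_t (Q (Ḃ_t x)) y`,
which skewness of `B_t` and `Q` turns into `Ḃ_t x (Q (B_t y))`; together with `Ḃ_t x (I₀ y)` it
gives `Ḃ_t x (I_t y)`. -/

theorem ContinuousLinearMap.apply_apply_eq_of_skew {R E : Type*} [NormedField R]
    [SeminormedAddCommGroup E] [NormedSpace R E]
    {Q : (E →L[R] R) →L[R] E} (hQ : ∀ ξ η : E →L[R] R, ξ (Q η) = -η (Q ξ))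
    {b : E →L[R] E →L[R] R} (hb : ∀ x y, b x y = -b y x) (ξ : E →L[R] R) (y : E) :
    b (Q ξ) y = ξ (Q (b y)) := by
  rw [hb, hQ, neg_neg]

theorem HasDerivAt.clm_apply_apply {𝕜 E F G : Type*} [NontriviallyNormedField 𝕜]
    [NormedAddCommGroup E] [NormedSpace 𝕜 E] [NormedAddCommGroup F] [NormedSpace 𝕜 F]
    [NormedAddCommGroup G] [NormedSpace 𝕜 G]
    {B : 𝕜 → E →L[𝕜] F →L[𝕜] G} {B' : E →L[𝕜] F →L[𝕜] G} {u : 𝕜 → E} {u' : E} {t : 𝕜}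
    (hB : HasDerivAt B B' t) (hu : HasDerivAt u u' t) (v : F) :
    HasDerivAt (fun s => B s (u s) v) (B' (u t) v + B t u' v) t := by
  simpa using (hB.clm_apply hu).clm_apply (hasDerivAt_const t v)

theorem deriv_B_type_one_one_general
    {E : Type*} [NormedAddCommGroup E] [NormedSpace ℝ E]
    (Q : (E →L[ℝ] ℝ) →L[ℝ] E)
    (hQ : ∀ ξ η : E →L[ℝ] ℝ, ξ (Q η) = -η (Q ξ))
    (I₀ : E →L[ℝ] E)
    (B : ℝ → E →L[ℝ] (E →L[ℝ] ℝ))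
    (hBdiff : Differentiable ℝ B)
    (hBskew : ∀ (t : ℝ) (x y : E), B t x y = -(B t y x))
    (I : ℝ → E →L[ℝ] E)
    (hI : ∀ t : ℝ, I t = I₀ + Q.comp (B t))
    (hgauge : ∀ (t : ℝ) (x y : E), B t x (I₀ y) + B t (I t x) y = 0) :
    ∀ (t : ℝ) (x y : E),
      deriv B t x (I t y) + deriv B t (I t x) y = 0 := by
  intro t x y
  -- `𝕜` and `F` are explicit so that the instances of `deriv B t` in the statement unify
  have hB : HasDerivAt B (deriv B t) t :=
    (hBdiff t).hasDerivAt (𝕜 := ℝ) (F := E →L[ℝ] E →L[ℝ] ℝ)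
  set B' := deriv B t
  have hI' : HasDerivAt I (Q.comp B') t := by
    rw [funext hI]
    simpa using ((hasDerivAt_const t Q).clm_comp hB).const_add I₀
  have hIx : HasDerivAt (fun s => I s x) (Q (B' x)) t := by
    simpa using hI'.clm_apply (hasDerivAt_const t x)
  have hsum := (hB.clm_apply_apply (hasDerivAt_const t x) (I₀ y)).add (hB.clm_apply_apply hIx y)
  rw [show (fun s => B s x (I₀ y)) + (fun s => B s (I s x) y) = fun _ => 0 from
    funext (hgauge · x y)] at hsum
  have key := hsum.unique (hasDerivAt_const t 0)
  rw [ContinuousLinearMap.apply_apply_eq_of_skew hQ (hBskew t)] at key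
  rw [hI t] at key ⊢
  simp only [add_apply, ContinuousLinearMap.comp_apply, map_add, map_zero,
    zero_apply, add_zero] at key ⊢
  linarith

theorem deriv_B_type_one_one
    {E : Type*} [NormedAddCommGroup E] [NormedSpace ℝ E] [FiniteDimensional ℝ E]
    (Q : (E →L[ℝ] ℝ) →L[ℝ] E)
    (hQ : ∀ ξ η : E →L[ℝ] ℝ, ξ (Q η) = -η (Q ξ))
    (I₀ : E →L[ℝ] E)
    (B : ℝ → E →L[ℝ] (E →L[ℝ] ℝ))
    (hBdiff : Differentiable ℝ B)
    (hBskew : ∀ (t : ℝ) (x y : E), B t x y = -(B t y x))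
    (I : ℝ → E →L[ℝ] E)
    (hI : ∀ t : ℝ, I t = I₀ + Q.comp (B t))
    (hgauge : ∀ (t : ℝ) (x y : E), B t x (I₀ y) + B t (I t x) y = 0) :
    ∀ (t : ℝ) (x y : E),
      deriv B t x (I t y) + deriv B t (I t x) y = 0 :=
  deriv_B_type_one_one_general Q hQ I₀ B hBdiff hBskew I hI hgauge
end

section
/- Let E be a finite-dimensional real normed vector space, let U ⊆ E be open, let p ∈ U, and let X : ℝ × U → E be a continuously differentiable time-dependent vector field with X(t, p) = 0 for all t ∈ [0,1]. Then there exists an open neighbourhood V of p with V ⊆ U such that for every x ∈ V there is a map φ : [0,1] → U with φ(0) = x and, for every t ∈ [0,1], φ has derivative X(t, φ(t)) at t (derivative within [0,1]); that is, the flow of X_t starting at any point of V is defined for all t ∈ [0,1] and stays in U. -/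
/-!
Choose a closed ball `B = closedBall p r ⊆ U`; on `[0,1] × B` the field is `K`-Lipschitz in space,
being `C¹` on a compact convex set. Composing `X t` with the radial retraction onto `B` (which is
`2`-Lipschitz in any normed space) gives a field that agrees with `X` on `B` and is globally
Lipschitz and bounded, so Picard–Lindelöf produces its integral curves on all of `[0,1]`. Since
`p` is a stationary point, Grönwall's inequality gives `dist (φ t) p ≤ dist (φ 0) p * exp (2 K t)`,
so curves starting within `r / exp (2 K)` of `p` never leave `B`, where they are integral curves
of `X` itself.
-/

open Set Metric NNReal Real

section

variable {E : Type*} [NormedAddCommGroup E] [NormedSpace ℝ E]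

theorem ContDiffOn.exists_forall_lipschitzOnWith_of_prod {F G : Type*} [NormedAddCommGroup F]
    [NormedSpace ℝ F] [NormedAddCommGroup G] [NormedSpace ℝ G] {f : F → E → G} {s : Set F}
    {B : Set E} (hf : ContDiffOn ℝ 1 (fun q : F × E => f q.1 q.2) (s ×ˢ B))
    (hs : Convex ℝ s) (hs' : IsCompact s) (hB : Convex ℝ B) (hB' : IsCompact B) :
    ∃ K, ∀ a ∈ s, LipschitzOnWith K (f a) B := by
  obtain ⟨K, hK⟩ := hf.exists_lipschitzOnWith one_ne_zero (hs.prod hB) (hs'.prod hB')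
  refine ⟨K, fun a ha => ?_⟩
  simpa only [mul_one, Function.comp_def] using
    hK.comp (LipschitzWith.prodMk_left a).lipschitzOnWith fun y hy => mk_mem_prod ha hy

noncomputable def radialRetraction (p : E) (r : ℝ) (y : E) : E :=
  p + (r / max ‖y - p‖ r) • (y - p)

lemma radialRetraction_mem_closedBall (p : E) {r : ℝ} (hr : 0 ≤ r) (y : E) :
    radialRetraction p r y ∈ closedBall p r := by
  rw [mem_closedBall_iff_norm, radialRetraction, add_sub_cancel_left, norm_smul,
    Real.norm_of_nonneg (div_nonneg hr (hr.trans (le_max_right _ _)))]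
  rcases hr.eq_or_lt with rfl | hr
  · simp
  calc r / max ‖y - p‖ r * ‖y - p‖ ≤ r / max ‖y - p‖ r * max ‖y - p‖ r := by
        gcongr; exact le_max_left _ _
    _ = r := div_mul_cancel₀ _ (hr.trans_le (le_max_right _ _)).ne'

lemma radialRetraction_of_mem_closedBall {p y : E} {r : ℝ} (hy : y ∈ closedBall p r) :
    radialRetraction p r y = y := by
  rw [mem_closedBall_iff_norm] at hy
  rcases (norm_nonneg _).trans hy |>.eq_or_lt with rfl | hr
  · simp [radialRetraction, sub_eq_zero.1 (norm_le_zero_iff.1 hy)]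
  · simp [radialRetraction, max_eq_right hy, hr.ne']

lemma norm_inv_smul_sub_inv_smul_le {a b : ℝ} {u v : E} (hb : 0 < b) (hba : b ≤ a)
    (hv : ‖v‖ ≤ b) : ‖a⁻¹ • u - b⁻¹ • v‖ ≤ (‖u - v‖ + (a - b)) / a := by
  have ha : 0 < a := hb.trans_le hba
  have hcoef : 0 ≤ b⁻¹ - a⁻¹ := sub_nonneg.2 (inv_anti₀ hb hba)
  calc ‖a⁻¹ • u - b⁻¹ • v‖ = ‖a⁻¹ • (u - v) - (b⁻¹ - a⁻¹) • v‖ := by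
        congr 1; simp only [smul_sub, sub_smul]; abel
    _ ≤ a⁻¹ * ‖u - v‖ + (b⁻¹ - a⁻¹) * ‖v‖ := by
        refine (norm_sub_le _ _).trans_eq ?_
        rw [norm_smul, norm_smul, Real.norm_of_nonneg (inv_nonneg.2 ha.le),
          Real.norm_of_nonneg hcoef]
    _ ≤ a⁻¹ * ‖u - v‖ + (b⁻¹ - a⁻¹) * b := by gcongr
    _ = (‖u - v‖ + (a - b)) / a := by field_simp

lemma lipschitzWith_radialRetraction (p : E) {r : ℝ} (hr : 0 < r) :
    LipschitzWith 2 (radialRetraction p r) := by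
  set N : E → ℝ := fun w => max ‖w‖ r
  have key : ∀ y z, N (z - p) ≤ N (y - p) →
      dist (radialRetraction p r y) (radialRetraction p r z) ≤ 2 * dist y z := by
    intro y z hNzy
    set u := y - p
    set v := z - p
    have hNu : r ≤ N u := le_max_right _ _
    have hdiff : N u - N v ≤ ‖u - v‖ :=
      (le_abs_self _).trans ((abs_max_sub_max_le_abs _ _ _).trans (abs_norm_sub_norm_le _ _))
    have huv : ‖u - v‖ = dist y z := by rw [sub_sub_sub_cancel_right, dist_eq_norm]
    calc dist (radialRetraction p r y) (radialRetraction p r z)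
        = r * ‖(N u)⁻¹ • u - (N v)⁻¹ • v‖ := by
          rw [dist_eq_norm, radialRetraction, radialRetraction, add_sub_add_left_eq_sub,
            div_eq_mul_inv, div_eq_mul_inv, mul_smul, mul_smul, ← smul_sub, norm_smul,
            Real.norm_of_nonneg hr.le]
      _ ≤ r * ((‖u - v‖ + (N u - N v)) / N u) := by
          gcongr
          exact norm_inv_smul_sub_inv_smul_le (hr.trans_le (le_max_right _ _)) hNzy
            (le_max_left _ _)
      _ ≤ ‖u - v‖ + (N u - N v) := by
          rw [mul_div_left_comm]
          exact mul_le_of_le_one_right (by linarith [norm_nonneg (u - v)])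
            (div_le_one_of_le₀ hNu (hr.le.trans hNu))
      _ ≤ 2 * dist y z := by linarith
  refine LipschitzWith.of_dist_le_mul fun y z => ?_
  rcases le_total (N (z - p)) (N (y - p)) with h | h
  · exact_mod_cast key y z h
  · rw [dist_comm, dist_comm y]
    exact_mod_cast key z y h

theorem exists_forall_mem_Icc_hasDerivWithinAt_of_lipschitzWith_of_norm_le [CompleteSpace E]
    {v : ℝ → E → E} {tmin tmax : ℝ} {K L : ℝ≥0} (htt : tmin ≤ tmax)
    (hlip : ∀ t ∈ Icc tmin tmax, LipschitzWith K (v t))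
    (hcont : ∀ x, ContinuousOn (v · x) (Icc tmin tmax))
    (hnorm : ∀ t ∈ Icc tmin tmax, ∀ x, ‖v t x‖ ≤ L) (x : E) :
    ∃ φ : ℝ → E, φ tmin = x ∧
      ∀ t ∈ Icc tmin tmax, HasDerivWithinAt φ (v t (φ t)) (Icc tmin tmax) t := by
  have hpl : IsPicardLindelof v (⟨tmin, left_mem_Icc.2 htt⟩ : Icc tmin tmax) x
      ⟨L * (tmax - tmin), by have := sub_nonneg.2 htt; positivity⟩ 0 L K :=
    { lipschitzOnWith := fun t ht => (hlip t ht).lipschitzOnWith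
      continuousOn := fun y _ => hcont y
      norm_le := fun t ht y _ => hnorm t ht y
      mul_max_le := by
        simp only [sub_self, max_eq_left (sub_nonneg.2 htt), coe_zero, sub_zero]
        exact le_rfl }
  exact hpl.exists_eq_forall_mem_Icc_hasDerivWithinAt₀

theorem dist_le_of_trajectory_ODE_of_eq_zero {v : ℝ → E → E} {K : ℝ≥0} {tmin tmax : ℝ}
    {p : E} {φ : ℝ → E} (hlip : ∀ t ∈ Icc tmin tmax, LipschitzWith K (v t))
    (hp : ∀ t ∈ Icc tmin tmax, v t p = 0)
    (hφ : ∀ t ∈ Icc tmin tmax, HasDerivWithinAt φ (v t (φ t)) (Icc tmin tmax) t) :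
    ∀ t ∈ Icc tmin tmax, dist (φ t) p ≤ dist (φ tmin) p * exp (K * (t - tmin)) := by
  have hIci : ∀ {f f' : ℝ → E},
      (∀ t ∈ Icc tmin tmax, HasDerivWithinAt f (f' t) (Icc tmin tmax) t) →
      ∀ t ∈ Ico tmin tmax, HasDerivWithinAt f (f' t) (Ici t) t := fun hf t ht =>
    (hf t (Ico_subset_Icc_self ht)).mono_of_mem_nhdsWithin (Icc_mem_nhdsGE_of_mem ht)
  refine dist_le_of_trajectories_ODE_of_mem (s := fun _ => univ)
    (fun t ht => (hlip t (Ico_subset_Icc_self ht)).lipschitzOnWith)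
    (fun t ht => (hφ t ht).continuousWithinAt) (hIci hφ) (fun _ _ => trivial)
    continuousOn_const (hIci fun t ht => ?_) (fun _ _ => trivial) le_rfl
  rw [hp t ht]
  exact hasDerivWithinAt_const _ _ _

theorem exists_flow_mem_closedBall_of_lipschitzOnWith_of_eq_zero [CompleteSpace E]
    {X : ℝ → E → E} {p : E} {r : ℝ} {K : ℝ≥0} {tmin tmax : ℝ} (hr : 0 < r) (htt : tmin ≤ tmax)
    (hlip : ∀ t ∈ Icc tmin tmax, LipschitzOnWith K (X t) (closedBall p r))
    (hcont : ∀ y ∈ closedBall p r, ContinuousOn (X · y) (Icc tmin tmax))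
    (hXp : ∀ t ∈ Icc tmin tmax, X t p = 0) {x : E}
    (hx : x ∈ closedBall p (r / exp (2 * K * (tmax - tmin)))) :
    ∃ φ : ℝ → E, φ tmin = x ∧ ∀ t ∈ Icc tmin tmax, φ t ∈ closedBall p r ∧
      HasDerivWithinAt φ (X t (φ t)) (Icc tmin tmax) t := by
  set Y : ℝ → E → E := fun t y => X t (radialRetraction p r y)
  have hYlip : ∀ t ∈ Icc tmin tmax, LipschitzWith (K * 2) (Y t) := fun t ht =>
    lipschitzOnWith_univ.1 <| (hlip t ht).comp
      (lipschitzWith_radialRetraction p hr).lipschitzOnWith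
      fun y _ => radialRetraction_mem_closedBall p hr.le y
  have hYp : ∀ t ∈ Icc tmin tmax, Y t p = 0 := fun t ht => by
    simp only [Y, radialRetraction_of_mem_closedBall (mem_closedBall_self hr.le), hXp t ht]
  have hYnorm : ∀ t ∈ Icc tmin tmax, ∀ y, ‖Y t y‖ ≤ K * r := fun t ht y => by
    have hy := radialRetraction_mem_closedBall p hr.le y
    calc ‖Y t y‖ = ‖X t (radialRetraction p r y) - X t p‖ := by rw [hXp t ht, sub_zero]
      _ ≤ K * ‖radialRetraction p r y - p‖ :=
        (hlip t ht).norm_sub_le hy (mem_closedBall_self hr.le)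
      _ ≤ K * r := by gcongr; exact mem_closedBall_iff_norm.1 hy
  obtain ⟨φ, hφ0, hφ⟩ := exists_forall_mem_Icc_hasDerivWithinAt_of_lipschitzWith_of_norm_le htt
    hYlip (fun y => hcont _ (radialRetraction_mem_closedBall p hr.le y))
    (L := ⟨K * r, by positivity⟩) hYnorm x
  have hφr : ∀ t ∈ Icc tmin tmax, φ t ∈ closedBall p r := fun t ht => by
    have hgronwall := dist_le_of_trajectory_ODE_of_eq_zero hYlip hYp hφ t ht
    rw [hφ0] at hgronwall
    rw [mem_closedBall] at hx ⊢
    calc dist (φ t) p ≤ dist x p * exp (↑(K * 2) * (t - tmin)) := hgronwall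
      _ ≤ dist x p * exp (2 * K * (tmax - tmin)) := by
          push_cast
          rw [mul_comm (K : ℝ)]
          gcongr
          exact ht.2
      _ ≤ r / exp (2 * K * (tmax - tmin)) * exp (2 * K * (tmax - tmin)) := by gcongr
      _ = r := div_mul_cancel₀ _ (exp_pos _).ne'
  refine ⟨φ, hφ0, fun t ht => ⟨hφr t ht, ?_⟩⟩
  simpa only [Y, radialRetraction_of_mem_closedBall (hφr t ht)] using hφ t ht

end

theorem flow_exists_near_zero_of_vector_field
    {E : Type*} [NormedAddCommGroup E] [NormedSpace ℝ E] [FiniteDimensional ℝ E]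
    (U : Set E) (hU : IsOpen U) (p : E) (hp : p ∈ U)
    (X : ℝ → E → E)
    (hX : ContDiffOn ℝ 1 (fun q : ℝ × E => X q.1 q.2) (Set.univ ×ˢ U))
    (hXp : ∀ t ∈ Set.Icc (0:ℝ) 1, X t p = 0) :
    ∃ V : Set E, IsOpen V ∧ p ∈ V ∧ V ⊆ U ∧
      ∀ x ∈ V, ∃ φ : ℝ → E, φ 0 = x ∧
        ∀ t ∈ Set.Icc (0:ℝ) 1, φ t ∈ U ∧
          HasDerivWithinAt φ (X t (φ t)) (Set.Icc (0:ℝ) 1) t := by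
  obtain ⟨r, hr, hrU⟩ := nhds_basis_closedBall.mem_iff.1 (hU.mem_nhds hp)
  have hXr : ContDiffOn ℝ 1 (fun q : ℝ × E => X q.1 q.2) (Icc 0 1 ×ˢ closedBall p r) :=
    hX.mono (prod_mono (subset_univ _) hrU)
  obtain ⟨K, hK⟩ := hXr.exists_forall_lipschitzOnWith_of_prod (convex_Icc 0 1) isCompact_Icc
    (convex_closedBall p r) (isCompact_closedBall p r)
  have hcont : ∀ y ∈ closedBall p r, ContinuousOn (X · y) (Icc 0 1) := fun y hy =>
    hXr.continuousOn.comp (by fun_prop) fun t ht => mk_mem_prod ht hy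
  set δ := r / exp (2 * K * (1 - 0))
  have hδr : δ ≤ r := div_le_self hr.le (one_le_exp (by positivity))
  refine ⟨ball p δ, isOpen_ball, mem_ball_self (by positivity),
    (ball_subset_closedBall.trans (closedBall_subset_closedBall hδr)).trans hrU, fun x hx => ?_⟩
  obtain ⟨φ, hφ0, hφ⟩ := exists_flow_mem_closedBall_of_lipschitzOnWith_of_eq_zero hr zero_le_one
    hK hcont hXp (ball_subset_closedBall hx)
  exact ⟨φ, hφ0, fun t ht => ⟨hrU (hφ t ht).1, (hφ t ht).2⟩⟩
end
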